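/- arXiv:2605.26582 — 3 statements merged into one kernel-verified Lean document; each statement's English description precedes it below -/
import Mathlib

section
/- Let $p_0, \pi$ be probability distributions on a finite set $S$ with $\pi$ strictly positive, and $0 < \alpha_t < 1$. Consider the posterior kernel $P(x_0 \mid x_t) = f_t(x_t)\delta_{x_t}(x_0) + (1-f_t(x_t))p_0(x_0)$ with $f_t(x_t) = \frac{\alpha_t p_0(x_t)}{\alpha_t p_0(x_t) + (1-\alpha_t)\pi(x_t)}$. Then the Dobrushin coefficient satisfies $\eta_{TV}(P) = \max_{i\neq j} TV(P(\cdot\mid i), P(\cdot\mid j)) \le \max_{x\in S} f_t(x) < 1$. -/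
open Finset

/-- Total variation distance between two distributions on a finite type. -/
noncomputable def tvDist {α : Type*} [Fintype α] (q p : α → ℝ) : ℝ :=
  (∑ x, |q x - p x|) / 2

/-- The Dobrushin coefficient of the lazy posterior kernel
`P(x₀ ∣ xₜ) = f(xₜ) δ_{xₜ}(x₀) + (1-f(xₜ)) p₀(x₀)` is at most `max_x f(x)`, which is `< 1`
when `π` is strictly positive. -/
theorem posterior_dobrushin_lt_one
    {S : Type*} [Fintype S] [DecidableEq S] [Nonempty S]
    (p0 π : S → ℝ) (hp0 : ∀ x, 0 ≤ p0 x) (hp0sum : ∑ x, p0 x = 1)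
    (hπ : ∀ x, 0 < π x) (hπsum : ∑ x, π x = 1)
    (αt : ℝ) (hαt0 : 0 < αt) (hαt1 : αt < 1)
    (f : S → ℝ) (hf : ∀ x, f x = αt * p0 x / (αt * p0 x + (1 - αt) * π x))
    (P : S → S → ℝ)
    (hP : ∀ x0 xt, P x0 xt = f xt * (if x0 = xt then (1 : ℝ) else 0) + (1 - f xt) * p0 x0) :
    (∀ i j : S, i ≠ j →
      tvDist (fun x0 => P x0 i) (fun x0 => P x0 j) ≤ univ.sup' univ_nonempty f) ∧
    univ.sup' univ_nonempty f < 1 := by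
  have hD : ∀ x, 0 < αt * p0 x + (1 - αt) * π x := by
    intro x
    have h1 : 0 ≤ αt * p0 x := mul_nonneg hαt0.le (hp0 x)
    have h2 : 0 < (1 - αt) * π x := mul_pos (by linarith) (hπ x)
    linarith
  have hf0 : ∀ x, 0 ≤ f x := by
    intro x
    rw [hf x]
    exact div_nonneg (mul_nonneg hαt0.le (hp0 x)) (hD x).le
  have hf1 : ∀ x, f x < 1 := by
    intro x
    rw [hf x, div_lt_one (hD x)]
    have h2 : 0 < (1 - αt) * π x := mul_pos (by linarith) (hπ x)
    linarith
  set M := univ.sup' univ_nonempty f with hM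
  have hle : ∀ x, f x ≤ M := fun x => le_sup' f (mem_univ x)
  constructor
  · intro i j hij
    have key : ∑ x, |P x i - P x j| ≤ 2 * M := by
      have hbd : ∀ x, |P x i - P x j| ≤
          (if x = i then f i else 0) + (if x = j then f j else 0) + |f j - f i| * p0 x := by
        intro x
        rw [hP x i, hP x j]
        by_cases hxi : x = i <;> by_cases hxj : x = j
        · exact absurd (hxi.symm.trans hxj) hij
        · simp only [hxi, if_pos rfl, if_neg hij, if_true]
          have : f i * 1 + (1 - f i) * p0 i - (f j * 0 + (1 - f j) * p0 i)
              = f i + (f j - f i) * p0 i := by ring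
          rw [this]
          calc |f i + (f j - f i) * p0 i| ≤ |f i| + |(f j - f i) * p0 i| := abs_add_le _ _
            _ = f i + 0 + |f j - f i| * p0 i := by
                rw [abs_of_nonneg (hf0 i), abs_mul, abs_of_nonneg (hp0 i)]; ring
        · simp only [hxj, if_pos rfl, if_neg hij.symm, if_true]
          have : f i * 0 + (1 - f i) * p0 j - (f j * 1 + (1 - f j) * p0 j)
              = -f j + (f j - f i) * p0 j := by ring
          rw [this]
          calc |-f j + (f j - f i) * p0 j| ≤ |-f j| + |(f j - f i) * p0 j| := abs_add_le _ _
            _ = 0 + f j + |f j - f i| * p0 j := by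
                rw [abs_neg, abs_of_nonneg (hf0 j), abs_mul, abs_of_nonneg (hp0 j)]; ring
        · simp only [hxi, hxj, if_false]
          have : f i * 0 + (1 - f i) * p0 x - (f j * 0 + (1 - f j) * p0 x)
              = (f j - f i) * p0 x := by ring
          rw [this, abs_mul, abs_of_nonneg (hp0 x)]
          linarith
      calc ∑ x, |P x i - P x j|
          ≤ ∑ x, ((if x = i then f i else 0) + (if x = j then f j else 0)
              + |f j - f i| * p0 x) := Finset.sum_le_sum (fun x _ => hbd x)
        _ = f i + f j + |f j - f i| := by
            rw [Finset.sum_add_distrib, Finset.sum_add_distrib, ← Finset.mul_sum, hp0sum,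
              Finset.sum_ite_eq' univ i (fun _ => f i), Finset.sum_ite_eq' univ j (fun _ => f j)]
            simp
        _ ≤ 2 * M := by
            have hi := hle i
            have hj := hle j
            rcases le_total (f i) (f j) with h | h
            · rw [abs_of_nonneg (by linarith)]; linarith
            · rw [abs_of_nonpos (by linarith)]; linarith
    unfold tvDist
    linarith
  · rw [hM, Finset.sup'_lt_iff]
    exact fun x _ => hf1 x
end

section
/- Let $K$ be a Markov kernel on a finite set with KL contraction coefficient $\eta := \eta_{KL}(K) = \sup_{q,p: 0< D_{KL}(q\Vert p)<\infty} \frac{D_{KL}(Kq\Vert Kp)}{D_{KL}(q\Vert p)}$ and let $K^{\otimes D}$ be its $D$-fold product acting coordinatewise on a product space. Let $q^{1:D}, p^{1:D}$ be distributions on the product with finite divergences. Then $D_{KL}(K^{\otimes D}q^{1:D} \Vert K^{\otimes D}p^{1:D}) \le \eta\left(D_{KL}(q^{1:D}\Vert p^{1:D}) - \mathrm{TC}(q^{1:D}) + \mathrm{CrossTC}_{p^{1:D}}(q^{1:D})\right) + \mathrm{TC}(K^{\otimes D}q^{1:D}) - \mathrm{CrossTC}_{K^{\otimes D}p^{1:D}}(K^{\otimes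 D}q^{1:D})$. -/
open Finset

/-- KL divergence between two distributions on a finite type (convention `0 log 0 = 0`). -/
noncomputable def klDiv {α : Type*} [Fintype α] (q p : α → ℝ) : ℝ :=
  ∑ x, q x * Real.log (q x / p x)

/-- Pushforward of a distribution through a Markov kernel on a finite set. -/
noncomputable def push {S : Type*} [Fintype S] (K : S → S → ℝ) (q : S → ℝ) : S → ℝ :=
  fun y => ∑ x, K x y * q x

/-- Pushforward through the `D`-fold product kernel `K^{⊗D}` acting coordinatewise. -/
noncomputable def prodPush {D : ℕ} {S : Type*} [Fintype S] [DecidableEq S]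
    (K : S → S → ℝ) (q : (Fin D → S) → ℝ) : (Fin D → S) → ℝ :=
  fun y => ∑ x, (∏ d, K (x d) (y d)) * q x

/-- The `d`-th coordinate marginal of a distribution on the product space `S^D`. -/
noncomputable def marg {D : ℕ} {S : Type*} [Fintype S] [DecidableEq S]
    (q : (Fin D → S) → ℝ) (d : Fin D) (a : S) : ℝ :=
  ∑ x, if x d = a then q x else 0

/-- Total correlation: `TC(q) = D_KL(q ‖ ∏_d q^d)`. -/
noncomputable def totalCorr {D : ℕ} {S : Type*} [Fintype S] [DecidableEq S]
    (q : (Fin D → S) → ℝ) : ℝ :=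
  ∑ x, q x * Real.log (q x / ∏ d, marg q d (x d))

/-- Cross total correlation: `CrossTC_p(q) = 𝔼_q[log (p(x) / ∏_d p^d(x^d))]`. -/
noncomputable def crossTotalCorr {D : ℕ} {S : Type*} [Fintype S] [DecidableEq S]
    (p q : (Fin D → S) → ℝ) : ℝ :=
  ∑ x, q x * Real.log (p x / ∏ d, marg p d (x d))

/-!
Since the marginals of `K^{⊗D} q` are the single-coordinate pushforwards `K q^d`, the chain rule
`D_KL(q ‖ p) = TC(q) - CrossTC_p(q) + ∑_d D_KL(q^d ‖ p^d)`, applied before and after the kernel,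
reduces the claim to the single-coordinate contraction `D_KL(K q^d ‖ K p^d) ≤ η D_KL(q^d ‖ p^d)`,
summed over `d`.
-/

theorem Real.log_div_eq_log_div_prod_sub_log_div_prod_add_sum {ι : Type*} [Fintype ι]
    {a b : ℝ} (ha : 0 < a) (hb : 0 < b) {u v : ι → ℝ} (hu : ∀ i, 0 < u i) (hv : ∀ i, 0 < v i) :
    Real.log (a / b)
      = Real.log (a / ∏ i, u i) - Real.log (b / ∏ i, v i) + ∑ i, Real.log (u i / v i) := by
  rw [Real.log_div ha.ne' hb.ne', Real.log_div ha.ne' (prod_pos fun i _ => hu i).ne',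
    Real.log_div hb.ne' (prod_pos fun i _ => hv i).ne', Real.log_prod fun i _ => (hu i).ne',
    Real.log_prod fun i _ => (hv i).ne']
  simp only [Real.log_div (hu _).ne' (hv _).ne', sum_sub_distrib]
  ring

section Marginals

variable {D : ℕ} {S : Type*} [Fintype S] [DecidableEq S]

theorem le_marg {q : (Fin D → S) → ℝ} (hq0 : ∀ x, 0 ≤ q x) (d : Fin D) (x : Fin D → S) :
    q x ≤ marg q d (x d) := by
  simpa [marg] using single_le_sum (f := fun y => if y d = x d then q y else 0)
    (fun y _ => by split <;> simp [hq0 y]) (mem_univ x)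

theorem marg_nonneg {q : (Fin D → S) → ℝ} (hq0 : ∀ x, 0 ≤ q x) (d : Fin D) (a : S) :
    0 ≤ marg q d a :=
  sum_nonneg fun x _ => by split <;> simp [hq0 x]

theorem sum_marg_mul (q : (Fin D → S) → ℝ) (d : Fin D) (f : S → ℝ) :
    ∑ a, marg q d a * f a = ∑ x, q x * f (x d) := by
  simp only [marg, sum_mul, ite_mul, zero_mul]
  rw [sum_comm]
  simp

theorem sum_marg (q : (Fin D → S) → ℝ) (d : Fin D) : ∑ a, marg q d a = ∑ x, q x := by
  simpa using sum_marg_mul q d fun _ => 1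

theorem marg_eq_zero_of_absCont {q p : (Fin D → S) → ℝ} (hp0 : ∀ x, 0 ≤ p x)
    (hac : ∀ x, p x = 0 → q x = 0) {d : Fin D} {a : S} (hpa : marg p d a = 0) :
    marg q d a = 0 := by
  refine sum_eq_zero fun x _ => ?_
  split_ifs with hx
  · subst hx
    exact hac x (le_antisymm (hpa ▸ le_marg hp0 d x) (hp0 x))
  · rfl

theorem klDiv_eq_totalCorr_sub_crossTotalCorr_add_sum_marg {q p : (Fin D → S) → ℝ}
    (hq0 : ∀ x, 0 ≤ q x) (hp0 : ∀ x, 0 ≤ p x) (hac : ∀ x, p x = 0 → q x = 0) :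
    klDiv q p = totalCorr q - crossTotalCorr p q + ∑ d, klDiv (marg q d) (marg p d) := by
  have hterm : ∀ x, q x * Real.log (q x / p x)
      = q x * Real.log (q x / ∏ d, marg q d (x d))
        - q x * Real.log (p x / ∏ d, marg p d (x d))
        + ∑ d, q x * Real.log (marg q d (x d) / marg p d (x d)) := by
    intro x
    rcases (hq0 x).eq_or_lt with hqx | hqx
    · simp [← hqx]
    have hpx : 0 < p x := (hp0 x).lt_of_ne fun h => hqx.ne' (hac x h.symm)
    rw [← mul_sum, ← mul_sub, ← mul_add,
      Real.log_div_eq_log_div_prod_sub_log_div_prod_add_sum hqx hpx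
        (fun d => hqx.trans_le (le_marg hq0 d x)) (fun d => hpx.trans_le (le_marg hp0 d x))]
  simp only [klDiv, totalCorr, crossTotalCorr, hterm, sum_add_distrib, sum_sub_distrib]
  rw [sum_comm]
  simp only [sum_marg_mul]

end Marginals

section ProductKernel

variable {D : ℕ} {S : Type*} [Fintype S] [DecidableEq S] {K : S → S → ℝ}

theorem prodPush_nonneg (hK0 : ∀ x y, 0 ≤ K x y) {q : (Fin D → S) → ℝ} (hq0 : ∀ x, 0 ≤ q x)
    (y : Fin D → S) : 0 ≤ prodPush K q y :=
  sum_nonneg fun x _ => mul_nonneg (prod_nonneg fun _ _ => hK0 _ _) (hq0 x)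

theorem prodPush_absCont (hK0 : ∀ x y, 0 ≤ K x y) {q p : (Fin D → S) → ℝ}
    (hp0 : ∀ x, 0 ≤ p x) (hac : ∀ x, p x = 0 → q x = 0) (y : Fin D → S)
    (hpy : prodPush K p y = 0) : prodPush K q y = 0 := by
  rw [prodPush, sum_eq_zero_iff_of_nonneg fun x _ =>
    mul_nonneg (prod_nonneg fun _ _ => hK0 _ _) (hp0 x)] at hpy
  refine sum_eq_zero fun x hx => ?_
  rcases mul_eq_zero.1 (hpy x hx) with hK | hpx
  · rw [hK, zero_mul]
  · rw [hac x hpx, mul_zero]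

theorem sum_prod_kernel_of_coord_eq (hK1 : ∀ x, ∑ y, K x y = 1) (x : Fin D → S) (d : Fin D)
    (a : S) : ∑ y : Fin D → S, (if y d = a then ∏ e, K (x e) (y e) else 0) = K (x d) a := by
  set k : Fin D → S → ℝ := fun e b => if e = d then (if b = a then K (x e) b else 0) else K (x e) b
  have hk : ∀ y : Fin D → S, (if y d = a then ∏ e, K (x e) (y e) else 0) = ∏ e, k e (y e) := by
    intro y
    split_ifs with hy
    · exact prod_congr rfl fun e _ => by by_cases he : e = d <;> simp [k, he, hy]
    · exact (prod_eq_zero (mem_univ d) (by simp [k, hy])).symm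
  rw [sum_congr rfl fun y _ => hk y, ← Fintype.prod_sum k, prod_eq_single d]
  · simp [k]
  · intro e _ he
    simp [k, he, hK1]
  · simp

theorem marg_prodPush (hK1 : ∀ x, ∑ y, K x y = 1) (q : (Fin D → S) → ℝ) (d : Fin D) :
    marg (prodPush K q) d = push K (marg q d) := by
  funext a
  calc marg (prodPush K q) d a
      = ∑ x, (∑ y : Fin D → S, if y d = a then ∏ e, K (x e) (y e) else 0) * q x := by
        simp only [marg, prodPush, sum_mul, ite_mul, zero_mul]
        rw [sum_comm]
        exact sum_congr rfl fun y _ => by split_ifs <;> simp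
    _ = ∑ x, q x * K (x d) a := by
        simp only [sum_prod_kernel_of_coord_eq hK1, mul_comm]
    _ = push K (marg q d) a := by
        simp only [push, mul_comm (K _ a), sum_marg_mul]

end ProductKernel

theorem product_kernel_kl_contraction_general
    {D : ℕ} {S : Type*} [Fintype S] [DecidableEq S]
    (K : S → S → ℝ) (hK0 : ∀ x y, 0 ≤ K x y) (hK1 : ∀ x, ∑ y, K x y = 1)
    (η : ℝ)
    (hη : ∀ q' p' : S → ℝ, (∀ x, 0 ≤ q' x) → ∑ x, q' x = 1 →
      (∀ x, 0 ≤ p' x) → ∑ x, p' x = 1 → (∀ x, p' x = 0 → q' x = 0) →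
      klDiv (push K q') (push K p') ≤ η * klDiv q' p')
    (q p : (Fin D → S) → ℝ)
    (hq0 : ∀ x, 0 ≤ q x) (hq1 : ∑ x, q x = 1)
    (hp0 : ∀ x, 0 ≤ p x) (hp1 : ∑ x, p x = 1)
    (hac : ∀ x, p x = 0 → q x = 0) :
    klDiv (prodPush K q) (prodPush K p)
      ≤ η * (klDiv q p - totalCorr q + crossTotalCorr p q)
        + totalCorr (prodPush K q) - crossTotalCorr (prodPush K p) (prodPush K q) := by
  have hmarg : ∀ d, klDiv (marg (prodPush K q) d) (marg (prodPush K p) d)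
      ≤ η * klDiv (marg q d) (marg p d) := fun d => by
    rw [marg_prodPush hK1, marg_prodPush hK1]
    exact hη _ _ (marg_nonneg hq0 d) (by rw [sum_marg, hq1]) (marg_nonneg hp0 d)
      (by rw [sum_marg, hp1]) fun a => marg_eq_zero_of_absCont hp0 hac
  rw [klDiv_eq_totalCorr_sub_crossTotalCorr_add_sum_marg hq0 hp0 hac,
    klDiv_eq_totalCorr_sub_crossTotalCorr_add_sum_marg (prodPush_nonneg hK0 hq0)
      (prodPush_nonneg hK0 hp0) (prodPush_absCont hK0 hp0 hac)]
  have hsum := sum_le_sum fun d (_ : d ∈ univ) => hmarg d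
  rw [← mul_sum] at hsum
  linarith

/-- Multidimensional KL contraction for product kernels: if `K` contracts KL divergence by
`η` on single coordinates, then
`D_KL(K^{⊗D}q ‖ K^{⊗D}p) ≤ η (D_KL(q ‖ p) - TC(q) + CrossTC_p(q))
  + TC(K^{⊗D}q) - CrossTC_{K^{⊗D}p}(K^{⊗D}q)`. -/
theorem product_kernel_kl_contraction
    {D : ℕ} {S : Type*} [Fintype S] [DecidableEq S]
    (K : S → S → ℝ) (hK0 : ∀ x y, 0 ≤ K x y) (hK1 : ∀ x, ∑ y, K x y = 1)
    (η : ℝ) (hη0 : 0 ≤ η)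
    (hη : ∀ q' p' : S → ℝ, (∀ x, 0 ≤ q' x) → ∑ x, q' x = 1 →
      (∀ x, 0 ≤ p' x) → ∑ x, p' x = 1 → (∀ x, p' x = 0 → q' x = 0) →
      klDiv (push K q') (push K p') ≤ η * klDiv q' p')
    (q p : (Fin D → S) → ℝ)
    (hq0 : ∀ x, 0 ≤ q x) (hq1 : ∑ x, q x = 1)
    (hp0 : ∀ x, 0 ≤ p x) (hp1 : ∑ x, p x = 1)
    (hac : ∀ x, p x = 0 → q x = 0)
    (hpd : ∀ d a, 0 < marg p d a)
    (hKpd : ∀ d a, 0 < marg (prodPush K p) d a) :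
    klDiv (prodPush K q) (prodPush K p)
      ≤ η * (klDiv q p - totalCorr q + crossTotalCorr p q)
        + totalCorr (prodPush K q) - crossTotalCorr (prodPush K p) (prodPush K q) :=
  product_kernel_kl_contraction_general K hK0 hK1 η hη q p hq0 hq1 hp0 hp1 hac
end

section
/- Let $U \to X_s \to X_t$ be a Markov chain of finite random variables, where $X_t$ is generated from $X_s$ by a masking channel: $X_t = X_s$ with probability $\lambda$ and $X_t = M$ (a fixed symbol not in the range of $X_s$) with probability $1-\lambda$, independently of $(U, X_s)$. Then the mutual information satisfies $I(U; X_t) = \lambda\, I(U; X_s)$. -/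
open Finset

/-- Mutual information of a finite joint distribution (convention `0 log 0 = 0`). -/
noncomputable def mutualInfo {A B : Type*} [Fintype A] [Fintype B] (μ : A × B → ℝ) : ℝ :=
  ∑ z, μ z * Real.log (μ z / ((∑ b, μ (z.1, b)) * (∑ a, μ (a, z.2))))

/-- Joint distribution of `(U, X_t)` when `X_t` is produced from `X_s` by the masking channel:
keep `X_s` with probability `λ`, otherwise output the mask `none`, independently of `(U, X_s)`. -/
noncomputable def maskJoint {U S : Type*} [Fintype S] (lam : ℝ) (μ : U × S → ℝ) :
    U × Option S → ℝ
  | (u, some x) => lam * μ (u, x)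
  | (u, none) => (1 - lam) * ∑ x, μ (u, x)

/-- For a Markov chain `U → X_s → X_t` with `X_t` a masking of `X_s`,
the mutual information satisfies `I(U; X_t) = λ I(U; X_s)`. -/
theorem masking_mutual_information
    {U S : Type*} [Fintype U] [Fintype S]
    (lam : ℝ) (hlam0 : 0 ≤ lam) (hlam1 : lam ≤ 1)
    (μ : U × S → ℝ) (hμ0 : ∀ z, 0 ≤ μ z) (hμ1 : ∑ z, μ z = 1) :
    mutualInfo (maskJoint lam μ) = lam * mutualInfo μ := by
  classical
  set p : U → ℝ := fun u => ∑ x, μ (u, x) with hp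
  set q : S → ℝ := fun x => ∑ u, μ (u, x) with hq
  have hrow : ∀ u : U, ∑ t : Option S, maskJoint lam μ (u, t) = p u := by
    intro u
    rw [Fintype.sum_option]
    simp only [maskJoint, hp]
    rw [← Finset.mul_sum]
    ring
  have hcolsome : ∀ x : S, ∑ u, maskJoint lam μ (u, some x) = lam * q x := by
    intro x
    simp only [maskJoint, hq]
    rw [Finset.mul_sum]
  have hcolnone : ∑ u, maskJoint lam μ (u, none) = 1 - lam := by
    simp only [maskJoint]
    rw [← Finset.mul_sum]
    rw [← Fintype.sum_prod_type, hμ1, mul_one]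
  unfold mutualInfo
  rw [Fintype.sum_prod_type, Fintype.sum_prod_type, Finset.mul_sum]
  refine Finset.sum_congr rfl ?_
  intro u _
  rw [Fintype.sum_option]
  have hnone : maskJoint lam μ (u, none) *
      Real.log (maskJoint lam μ (u, none) /
        ((∑ b, maskJoint lam μ (u, b)) * (∑ a, maskJoint lam μ (a, none)))) = 0 := by
    rw [hrow u, hcolnone]
    show (1 - lam) * p u * Real.log ((1 - lam) * p u / (p u * (1 - lam))) = 0
    by_cases hc : (1 - lam) * p u = 0
    · rw [hc, zero_mul]
    · rw [mul_comm (p u) (1 - lam), div_self hc, Real.log_one, mul_zero]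
  rw [hnone, zero_add]
  rw [Finset.mul_sum]
  refine Finset.sum_congr rfl ?_
  intro x _
  rw [hrow u, hcolsome x]
  show lam * μ (u, x) * Real.log (lam * μ (u, x) / (p u * (lam * q x))) =
      lam * (μ (u, x) * Real.log (μ (u, x) / (p u * q x)))
  by_cases hl : lam = 0
  · simp [hl]
  · rw [show p u * (lam * q x) = lam * (p u * q x) by ring,
      mul_div_mul_left _ _ hl]
    ring
end
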